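/- arXiv:1211.7128 — 2 statements merged into one kernel-verified Lean document; each statement's English description precedes it below -/
import Mathlib

section
/- The number of lattice points in the l^1 ball of radius p centered at a lattice point in Z^k equals the sum over i from 0 to k of 2^i * C(k,i) * C(p,i). -/
/-!
Splitting off the first coordinate `v`, the points of the `ℓ¹`-ball of radius `p` in `ℤ^(k+1)`
are the points of the balls of radius `p - |v|` in `ℤ^k`, so the counts `N k p` satisfy
`N (k + 1) p = N k p + 2 ∑_{j < p} N k j` and `N 0 p = 1`. The Delannoy numbers
`∑ i, 2^i C(k,i) C(p,i)` satisfy the same recursion, by Pascal's rule and the hockey-stick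
identity.
-/

open Finset

def delannoy (k p : ℕ) : ℕ := ∑ i ∈ range (k + 1), 2 ^ i * k.choose i * p.choose i

theorem sum_range_choose_eq_choose_succ (p m : ℕ) :
    ∑ j ∈ range p, j.choose m = p.choose (m + 1) := by
  induction p with
  | zero => simp
  | succ p ih => rw [sum_range_succ, ih, Nat.choose_succ_succ', add_comm]

theorem delannoy_zero_left (p : ℕ) : delannoy 0 p = 1 := by
  simp [delannoy]

theorem delannoy_succ_left (k p : ℕ) :
    delannoy (k + 1) p = delannoy k p + 2 * ∑ j ∈ range p, delannoy k j := by
  have hsum : 2 * ∑ j ∈ range p, delannoy k j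
      = ∑ i ∈ range (k + 1), 2 ^ (i + 1) * k.choose i * p.choose (i + 1) := by
    simp only [delannoy, mul_sum]
    rw [sum_comm]
    refine sum_congr rfl fun i _ => ?_
    rw [← mul_sum, ← sum_range_choose_eq_choose_succ, mul_sum, mul_sum]
    exact sum_congr rfl fun j _ => by ring
  have hshift : delannoy k p
      = ∑ i ∈ range (k + 1), 2 ^ (i + 1) * k.choose (i + 1) * p.choose (i + 1) + 1 := by
    rw [delannoy]
    have h := sum_range_succ' (fun i => 2 ^ i * k.choose i * p.choose i) (k + 1)
    rw [sum_range_succ, Nat.choose_succ_self] at h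
    simpa only [mul_zero, zero_mul, add_zero, pow_zero, Nat.choose_zero_right, mul_one] using h
  rw [hsum, hshift, delannoy, sum_range_succ']
  simp only [Nat.choose_succ_succ', mul_add, add_mul, sum_add_distrib, pow_zero,
    Nat.choose_zero_right, mul_one]
  ring

theorem sum_Icc_neg_natAbs {M : Type*} [AddCommMonoid M] (f : ℕ → M) (n : ℕ) :
    ∑ v ∈ Icc (-(n : ℤ)) n, f v.natAbs = f 0 + 2 • ∑ j ∈ range n, f (j + 1) := by
  induction n with
  | zero => simp
  | succ n ih =>
    have hIcc : Icc (-((n + 1 : ℕ) : ℤ)) (n + 1 : ℕ)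
        = insert (-((n + 1 : ℕ) : ℤ)) (insert ((n + 1 : ℕ) : ℤ) (Icc (-(n : ℤ)) n)) := by
      ext v; simp only [mem_Icc, mem_insert]; omega
    rw [hIcc, sum_insert (by simp only [mem_insert, mem_Icc]; omega), sum_insert (by simp), ih,
      sum_range_succ]
    simp only [Int.natAbs_neg, Int.natAbs_natCast, smul_add, two_smul]
    abel

noncomputable def l1Ball (k p : ℕ) : Finset (Fin k → ℤ) :=
  {x ∈ Fintype.piFinset fun _ => Icc (-(p : ℤ)) p | ∑ i, |x i| ≤ p}

theorem mem_l1Ball {k p : ℕ} {x : Fin k → ℤ} : x ∈ l1Ball k p ↔ ∑ i, |x i| ≤ p := by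
  refine ⟨fun hx => (mem_filter.1 hx).2, fun hx => mem_filter.2 ⟨?_, hx⟩⟩
  refine Fintype.mem_piFinset.2 fun i => mem_Icc.2 (abs_le.1 ?_)
  exact (single_le_sum (fun j _ => abs_nonneg (x j)) (mem_univ i)).trans hx

theorem coe_l1Ball (k p : ℕ) :
    (l1Ball k p : Set (Fin k → ℤ)) = {x | ∑ i, |x i| ≤ (p : ℤ)} := by
  ext x; exact mem_l1Ball

theorem card_l1Ball_zero (p : ℕ) : #(l1Ball 0 p) = 1 := by
  rw [card_eq_one]
  exact ⟨finZeroElim, eq_singleton_iff_unique_mem.2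
    ⟨by simp [mem_l1Ball], fun x _ => Subsingleton.elim _ _⟩⟩

theorem cons_mem_l1Ball {k p : ℕ} {v : ℤ} {y : Fin k → ℤ} :
    Fin.cons v y ∈ l1Ball (k + 1) p ↔
      v ∈ Icc (-(p : ℤ)) p ∧ y ∈ l1Ball k (p - v.natAbs) := by
  have hy : 0 ≤ ∑ i, |y i| := sum_nonneg fun i _ => abs_nonneg (y i)
  simp only [mem_l1Ball, Fin.sum_univ_succ, Fin.cons_zero, Fin.cons_succ, mem_Icc,
    Int.abs_eq_natAbs v]
  omega

theorem card_l1Ball_succ (k p : ℕ) :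
    #(l1Ball (k + 1) p) = ∑ v ∈ Icc (-(p : ℤ)) p, #(l1Ball k (p - v.natAbs)) := by
  rw [← card_sigma]
  refine card_nbij' (fun x => ⟨x 0, Fin.tail x⟩) (fun y => Fin.cons y.1 y.2) ?_ ?_ ?_ ?_
  · intro x hx
    rw [mem_coe, ← Fin.cons_self_tail x, cons_mem_l1Ball] at hx
    exact mem_sigma.2 hx
  · intro y hy
    exact cons_mem_l1Ball.2 (mem_sigma.1 hy)
  · intro x _
    exact Fin.cons_self_tail x
  · intro y _
    simp

theorem card_l1Ball (k p : ℕ) : #(l1Ball k p) = delannoy k p := by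
  induction k generalizing p with
  | zero => rw [card_l1Ball_zero, delannoy_zero_left]
  | succ k ih =>
    rw [card_l1Ball_succ, sum_Icc_neg_natAbs (fun j => #(l1Ball k (p - j))), delannoy_succ_left,
      ← sum_range_reflect (delannoy k), smul_eq_mul]
    simp only [ih, Nat.sub_zero]
    congr 2
    exact sum_congr rfl fun j _ => by congr 1; omega

theorem stmt0_general (k p : ℕ) :
    {x : Fin k → ℤ | ∑ i, |x i| ≤ (p : ℤ)}.ncard
      = ∑ i ∈ Finset.range (k + 1), 2 ^ i * k.choose i * p.choose i := by
  rw [← coe_l1Ball, Set.ncard_coe_finset, card_l1Ball, delannoy]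

theorem stmt0 (k p : ℕ) (hk : 0 < k) (hp : 0 < p) :
    {x : Fin k → ℤ | ∑ i, |x i| ≤ (p : ℤ)}.ncard
      = ∑ i ∈ Finset.range (k + 1), 2 ^ i * k.choose i * p.choose i :=
  stmt0_general k p
end

section
/- A path with n vertices has diameter n-1, and a cycle with 2D vertices has diameter D; consequently, the largest connected subgraph of the k-dimensional mesh (k >= 2) with maximum degree at most 2 and diameter at most 2p has exactly 4p vertices, and with diameter at most 2p+1 has exactly 4p+2 vertices. -/
/-!
Distances in paths and cycles are bounded above by explicit walks and below by potentials that
change by at most one along an edge: the index of a vertex, resp. its distance to `0` around the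
cycle.

For the extremal statement, let a connected graph of maximum degree two have all distances at
most `R`. Around any vertex `r`, every vertex at distance `d + 2` hangs off its own vertex at
distance `d + 1` (a second one would give that vertex a third neighbour), so each sphere has at
most `deg r` vertices and there are at most `1 + R * deg r ≤ 2 * R + 1` vertices. Equality forces
every degree to be two, and a `2`-regular bipartite graph has an even number of vertices. The mesh
is bipartite by the parity of the coordinate sum, so `2 * R` is an upper bound, attained by the
boundary of a `2 × R` rectangle, a cycle of length `2 * R` and diameter `R`.
-/

open SimpleGraph Finset Filter Asymptotics

/-- The `k`-dimensional mesh: graph on `ℤ^k` with edges between points at `ℓ¹` distance 1. -/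
def mesh (k : ℕ) : SimpleGraph (Fin k → ℤ) :=
  SimpleGraph.fromRel (fun x y => ∑ i, |x i - y i| = 1)

namespace SimpleGraph

variable {V : Type*} {G : SimpleGraph V}

theorem Walk.le_add_length {f : V → ℕ} (hf : ∀ ⦃u v⦄, G.Adj u v → f v ≤ f u + 1)
    {u v : V} (w : G.Walk u v) : f v ≤ f u + w.length := by
  induction w with
  | nil => simp
  | cons h _ ih => have := hf h; rw [Walk.length_cons]; omega

theorem Reachable.le_add_dist {f : V → ℕ} (hf : ∀ ⦃u v⦄, G.Adj u v → f v ≤ f u + 1)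
    {u v : V} (h : G.Reachable u v) : f v ≤ f u + G.dist u v := by
  obtain ⟨w, hw⟩ := h.exists_walk_length_eq_dist
  exact hw ▸ w.le_add_length hf

theorem Connected.diam_eq [Finite V] (hG : G.Connected) {d : ℕ} (hle : ∀ u v, G.dist u v ≤ d)
    {u₀ v₀ : V} (hd : d ≤ G.dist u₀ v₀) : G.diam = d := by
  have := hG.nonempty
  obtain ⟨u, v, huv⟩ := G.exists_dist_eq_diam
  exact le_antisymm (huv ▸ hle u v) (hd.trans (dist_le_diam (connected_iff_ediam_ne_top.mp hG)))

theorem Reachable.exists_adj_dist_eq {r v : V} (h : G.Reachable r v) {d : ℕ}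
    (hd : G.dist r v = d + 1) : ∃ u, G.Adj u v ∧ G.dist r u = d := by
  obtain ⟨w, hw⟩ := h.exists_walk_length_eq_dist
  have hnil : ¬ w.Nil := by rw [← Walk.length_eq_zero_iff]; omega
  have hadj := w.adj_penultimate hnil
  refine ⟨w.penultimate, hadj, le_antisymm ?_ ?_⟩
  · have := G.dist_le w.dropLast
    rw [Walk.length_dropLast] at this
    omega
  · have := hadj.reachable.dist_triangle_right r
    rw [dist_eq_one_iff_adj.mpr hadj] at this
    omega

theorem Reachable.dist_map_le {α β : Type*} {A : SimpleGraph α} {B : SimpleGraph β}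
    (f : A →g B) {a b : α} (h : A.Reachable a b) : B.dist (f a) (f b) ≤ A.dist a b := by
  obtain ⟨w, hw⟩ := h.exists_walk_length_eq_dist
  exact (dist_le (w.map f)).trans_eq (by rw [Walk.length_map, hw])

theorem pathGraph_dist_of_le {n : ℕ} {u v : Fin n} (h : u ≤ v) :
    (pathGraph n).dist u v = (v : ℕ) - u := by
  refine le_antisymm ?_ ?_
  · suffices ∀ d, ∀ v : Fin n, (u : ℕ) + d = v → (pathGraph n).dist u v ≤ d by
      exact this _ v (by rw [Fin.le_def] at h; omega)
    intro d
    induction d with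
    | zero => intro v hv; rw [Fin.ext (by omega : u.val = v.val)]; simp
    | succ d ih =>
      intro v hv
      let v' : Fin n := ⟨v - 1, by omega⟩
      have hadj : (pathGraph n).Adj v' v := pathGraph_adj.mpr (Or.inl (by simp only [v']; omega))
      calc (pathGraph n).dist u v ≤ (pathGraph n).dist u v' + (pathGraph n).dist v' v :=
            hadj.reachable.dist_triangle_right u
        _ ≤ d + 1 := by
          rw [dist_eq_one_iff_adj.mpr hadj]
          have := ih v' (by simp only [v']; omega)
          omega
  · have := (pathGraph_preconnected n u v).le_add_dist (f := Fin.val) fun a b hab => by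
      rcases pathGraph_adj.mp hab with h | h <;> omega
    omega

theorem pathGraph_diam {n : ℕ} (hn : 1 ≤ n) : (pathGraph n).diam = n - 1 := by
  obtain ⟨m, rfl⟩ := Nat.exists_eq_add_of_le' hn
  refine (pathGraph_connected m).diam_eq (fun u v => ?_) (u₀ := 0) (v₀ := Fin.last m) ?_
  · rcases le_total u v with h | h
    · rw [pathGraph_dist_of_le h]; omega
    · rw [dist_comm, pathGraph_dist_of_le h]; omega
  · rw [pathGraph_dist_of_le (Fin.zero_le _)]; simp

theorem cycleGraph_adj_val {n : ℕ} {u v : Fin n} (h : (cycleGraph n).Adj u v) :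
    u.val + 1 = v.val ∨ v.val + 1 = u.val ∨ (u.val + 1 = n ∧ v.val = 0) ∨
      (v.val + 1 = n ∧ u.val = 0) := by
  have hu := u.isLt
  have hv := v.isLt
  rcases cycleGraph_adj'.mp h with h | h <;> [rcases le_or_gt v u with h' | h';
    rcases le_or_gt u v with h' | h'] <;>
  first
  | rw [Fin.coe_sub_iff_le.mpr h'] at h; rw [Fin.le_def] at h'; omega
  | rw [Fin.coe_sub_iff_lt.mpr h'] at h; rw [Fin.lt_def] at h'; omega

theorem cycleGraph_dist_le {n : ℕ} {u v : Fin n} (h : u ≤ v) :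
    (cycleGraph n).dist u v ≤ min ((v : ℕ) - u) (n - ((v : ℕ) - u)) := by
  have hreach := cycleGraph_preconnected (n := n)
  have hpath {a b : Fin n} (hab : a ≤ b) : (cycleGraph n).dist a b ≤ (b : ℕ) - a :=
    pathGraph_dist_of_le hab ▸ (pathGraph_preconnected n a b).dist_anti pathGraph_le_cycleGraph
  obtain ⟨m, rfl⟩ : ∃ m, n = m + 1 := ⟨n - 1, by have := u.pos; omega⟩
  have hwrap : (cycleGraph (m + 1)).dist 0 (Fin.last m) ≤ 1 := by
    rcases m with _ | m
    · simp
    · exact (dist_eq_one_iff_adj.mpr (cycleGraph_adj.mpr (.inl (by simp)))).le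
  have hleft : (cycleGraph (m + 1)).dist u 0 ≤ u := by
    rw [dist_comm]; simpa using hpath (Fin.zero_le u)
  have hright : (cycleGraph (m + 1)).dist (Fin.last m) v ≤ m - v := by
    rw [dist_comm]; simpa using hpath (Fin.le_last v)
  have hround := calc (cycleGraph (m + 1)).dist u v
      ≤ (cycleGraph (m + 1)).dist u 0 + (cycleGraph (m + 1)).dist 0 v :=
        (hreach u 0).dist_triangle_left v
    _ ≤ (cycleGraph (m + 1)).dist u 0 + ((cycleGraph (m + 1)).dist 0 (Fin.last m) +
          (cycleGraph (m + 1)).dist (Fin.last m) v) := by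
        gcongr; exact (hreach 0 _).dist_triangle_left v
  have := hpath h
  rw [Fin.le_def] at h
  omega

theorem ncard_neighborSet_cycleGraph_le : ∀ {n : ℕ} (v : Fin n),
    ((cycleGraph n).neighborSet v).ncard ≤ 2
  | 1, v => by simp [cycleGraph_one_eq_bot]
  | n + 2, v => by
    rw [cycleGraph_neighborSet]
    exact (Set.ncard_insert_le _ _).trans (by simp)

theorem cycleGraph_two_mul_diam {D : ℕ} (hD : 1 ≤ D) : (cycleGraph (2 * D)).diam = D := by
  have : NeZero (2 * D) := ⟨by omega⟩
  refine Connected.diam_eq ⟨cycleGraph_preconnected⟩ (fun u v => ?_) (u₀ := 0)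
    (v₀ := ⟨D, by omega⟩) ?_
  · rcases le_total u v with h | h
    · have := cycleGraph_dist_le h; omega
    · have := cycleGraph_dist_le h; rw [dist_comm]; omega
  · have := (cycleGraph_preconnected (n := 2 * D) 0 ⟨D, by omega⟩).le_add_dist
      (f := fun x => min x.val (2 * D - x.val)) fun a b hab => by
        have := a.isLt; have := b.isLt
        rcases cycleGraph_adj_val hab with h | h | h | h <;> omega
    simp only [Fin.val_zero] at this
    omega

section Finite

variable [Fintype V] [DecidableRel G.Adj]

theorem card_sphere_succ_succ_le (hG : G.Connected) (hdeg : ∀ v, G.degree v ≤ 2) (r : V)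
    (d : ℕ) : #{v | G.dist r v = d + 2} ≤ #{v | G.dist r v = d + 1} := by
  choose! p hpadj hpdist using fun v (hv : G.dist r v = d + 2) => (hG r v).exists_adj_dist_eq hv
  refine card_le_card_of_injOn p (fun v hv => ?_) fun v hv v' hv' hpv => ?_
  · simp only [coe_filter, mem_univ, true_and, Set.mem_ofPred_eq] at hv ⊢
    exact hpdist v hv
  · simp only [coe_filter, mem_univ, true_and, Set.mem_ofPred_eq] at hv hv'
    by_contra hne
    -- otherwise `p v` has three neighbours: `v`, `v'` and a vertex one step closer to `r`
    obtain ⟨w, hw, hwd⟩ := (hG r (p v)).exists_adj_dist_eq (hpdist v hv)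
    have : 2 < G.degree (p v) := by
      rw [← card_neighborFinset_eq_degree, two_lt_card]
      refine ⟨v, ?_, v', ?_, w, ?_, hne, ?_, ?_⟩
      · simpa using hpadj v hv
      · simpa [hpv] using hpadj v' hv'
      · simpa using hw.symm
      · rintro rfl; omega
      · rintro rfl; omega
    exact (hdeg (p v)).not_gt this

theorem card_sphere_succ_le_degree (hG : G.Connected) (hdeg : ∀ v, G.degree v ≤ 2) (r : V) :
    ∀ d, #{v | G.dist r v = d + 1} ≤ G.degree r
  | 0 => by
    rw [← card_neighborFinset_eq_degree]
    exact (card_le_card fun v => by simp)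
  | d + 1 => (card_sphere_succ_succ_le hG hdeg r d).trans (card_sphere_succ_le_degree hG hdeg r d)

theorem card_le_one_add_mul_degree (hG : G.Connected) (hdeg : ∀ v, G.degree v ≤ 2) {R : ℕ}
    (r : V) (hR : ∀ v, G.dist r v ≤ R) : Fintype.card V ≤ 1 + R * G.degree r := by
  have hcenter : #{v | G.dist r v = 0} = 1 :=
    card_eq_one.mpr ⟨r, by ext v; simp [hG.dist_eq_zero_iff, eq_comm]⟩
  rw [← card_univ, card_eq_sum_card_fiberwise (f := G.dist r) (t := range (R + 1))
    fun v _ => by simpa [Nat.lt_succ_iff] using hR v, sum_range_succ', hcenter, add_comm 1]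
  gcongr
  calc ∑ d ∈ range R, #{v | G.dist r v = d + 1} ≤ ∑ _d ∈ range R, G.degree r :=
        sum_le_sum fun d _ => card_sphere_succ_le_degree hG hdeg r d
    _ = R * G.degree r := by simp

theorem IsRegularOfDegree.even_card_of_isBipartite {d : ℕ} (hreg : G.IsRegularOfDegree d)
    (hd : d ≠ 0) (hbip : G.IsBipartite) : Even (Fintype.card V) := by
  classical
  obtain ⟨c⟩ := hbip
  let s : Finset V := {v | c v = 0}
  have hst : G.IsBipartiteWith (s : Set V) ((sᶜ : Finset V) : Set V) := by
    refine ⟨by simpa using disjoint_compl_right, fun v w hvw => ?_⟩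
    have := c.valid hvw
    simp only [s, coe_compl, coe_filter, mem_univ, true_and, Set.mem_compl_iff,
      Set.mem_ofPred_eq, Fin.ext_iff] at this ⊢
    omega
  have hsum := isBipartiteWith_sum_degrees_eq hst
  simp only [hreg.degree_eq, sum_const, smul_eq_mul] at hsum
  rw [← card_add_card_compl s, ← Nat.eq_of_mul_eq_mul_right (Nat.pos_of_ne_zero hd) hsum]
  exact Even.add_self _

theorem Connected.card_le_two_mul_of_isBipartite (hG : G.Connected) (hbip : G.IsBipartite)
    (hdeg : ∀ v, G.degree v ≤ 2) {R : ℕ} (hR : 1 ≤ R) (hdist : ∀ u v, G.dist u v ≤ R) :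
    Fintype.card V ≤ 2 * R := by
  by_contra! hlt
  have hbound v := card_le_one_add_mul_degree hG hdeg v (hdist v)
  have hreg : G.IsRegularOfDegree 2 := fun v => by
    rcases (by have := hdeg v; omega : G.degree v ≤ 1 ∨ G.degree v = 2) with h | h
    · have := Nat.mul_le_mul_left R h; have := hbound v; omega
    · exact h
  have := hbound hG.nonempty.some
  rw [hreg.degree_eq] at this
  obtain ⟨k, hk⟩ := hreg.even_card_of_isBipartite two_ne_zero hbip
  omega

end Finite

theorem Subgraph.ncard_verts_le_two_mul_of_isBipartite {H : G.Subgraph} (hbip : G.IsBipartite)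
    (hfin : H.verts.Finite) (hH : H.Connected) (hdeg : ∀ v, (H.neighborSet v).ncard ≤ 2)
    {R : ℕ} (hR : 1 ≤ R) (hdist : ∀ u v : H.verts, H.coe.dist u v ≤ R) :
    H.verts.ncard ≤ 2 * R := by
  classical
  have := hfin.fintype
  rw [← Nat.card_coe_set_eq, Nat.card_eq_fintype_card]
  refine (Subgraph.connected_iff'.mp hH).card_le_two_mul_of_isBipartite (hbip.subgraph H)
    (fun v => ?_) hR hdist
  rw [Subgraph.coe_degree, Subgraph.degree, ← Nat.card_eq_fintype_card, Nat.card_coe_set_eq]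
  exact hdeg v

section Iso

variable {α : Type*} {A : SimpleGraph α} {H : G.Subgraph}

theorem Subgraph.ncard_neighborSet_le_of_iso (e : A ≃g H.coe) {d : ℕ}
    (hA : ∀ a, (A.neighborSet a).ncard ≤ d) (v : V) : (H.neighborSet v).ncard ≤ d := by
  by_cases hv : v ∈ H.verts
  · obtain ⟨a, ha⟩ := e.surjective ⟨v, hv⟩
    have : (H.neighborSet v).ncard = (A.neighborSet a).ncard := by
      simp_rw [← Nat.card_coe_set_eq]
      exact Nat.card_congr (ha ▸ (e.mapNeighborSet a).trans (H.coeNeighborSetEquiv (e a))).symm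
    exact this ▸ hA a
  · have : H.neighborSet v = ∅ := Set.eq_empty_of_forall_notMem fun w hw => hv (H.edge_vert hw)
    simp [this]

theorem Subgraph.dist_le_diam_of_iso [Finite α] (e : A ≃g H.coe) (hA : A.Connected)
    (u v : H.verts) : H.coe.dist u v ≤ A.diam := by
  have := hA.nonempty
  obtain ⟨a, rfl⟩ := e.surjective u
  obtain ⟨b, rfl⟩ := e.surjective v
  exact ((hA a b).dist_map_le e.toHom).trans (dist_le_diam (connected_iff_ediam_ne_top.mp hA))

end Iso

theorem isGreatest_ncard_subgraph_of_isBipartite (hbip : G.IsBipartite) {R : ℕ} (hR : 1 ≤ R)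
    (hC : cycleGraph (2 * R) ⊑ G) :
    IsGreatest {n | ∃ H : G.Subgraph, H.verts.Finite ∧ H.Connected ∧
      (∀ v, (H.neighborSet v).ncard ≤ 2) ∧ (∀ u v : H.verts, H.coe.dist u v ≤ R) ∧
      H.verts.ncard = n} (2 * R) := by
  refine ⟨?_, fun n ⟨H, hfin, hH, hdeg, hdist, hn⟩ =>
    hn ▸ H.ncard_verts_le_two_mul_of_isBipartite hbip hfin hH hdeg hR hdist⟩
  obtain ⟨H, ⟨e⟩⟩ := isContained_iff_exists_iso_subgraph.mp hC
  have : NeZero (2 * R) := ⟨by omega⟩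
  have hconn : (cycleGraph (2 * R)).Connected := ⟨cycleGraph_preconnected⟩
  refine ⟨H, Set.finite_coe_iff.mp (Finite.of_equiv _ e.toEquiv),
    Subgraph.connected_iff'.mpr (e.connected_iff.mp hconn),
    H.ncard_neighborSet_le_of_iso e ncard_neighborSet_cycleGraph_le,
    fun u v => (H.dist_le_diam_of_iso e hconn u v).trans (cycleGraph_two_mul_diam hR).le, ?_⟩
  rw [← Nat.card_coe_set_eq, ← Nat.card_congr e.toEquiv, Nat.card_eq_fintype_card,
    Fintype.card_fin]

end SimpleGraph

theorem mesh_adj {k : ℕ} {x y : Fin k → ℤ} : (mesh k).Adj x y ↔ ∑ i, |x i - y i| = 1 := by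
  rw [mesh, fromRel_adj]
  refine ⟨fun ⟨_, h⟩ => h.elim id fun h =>
    (sum_congr rfl fun i _ => abs_sub_comm _ _).trans h, fun h => ⟨?_, .inl h⟩⟩
  rintro rfl
  simp at h

theorem mesh_isBipartite (k : ℕ) : (mesh k).IsBipartite := by
  have habs (a : ℤ) : ((|a| : ℤ) : ZMod 2) = a := by
    rcases abs_choice a with h | h <;> simp [h, ZMod.neg_eq_self_mod_two]
  have h := (Coloring.mk (G := mesh k) (fun x : Fin k → ℤ => ((∑ i, x i : ℤ) : ZMod 2))
    fun {x y} hxy heq => ?_).colorable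
  · rwa [ZMod.card] at h
  · have h1 := congrArg (Int.cast : ℤ → ZMod 2) (mesh_adj.mp hxy)
    simp only [Int.cast_sum, habs, Int.cast_sub, sum_sub_distrib, Int.cast_one] at h1 heq
    rw [heq, sub_self] at h1
    exact zero_ne_one h1

theorem mesh_adj_cons_cons {n : ℕ} {a b a' b' : ℤ} :
    (mesh (n + 2)).Adj (Fin.cons a (Fin.cons b 0)) (Fin.cons a' (Fin.cons b' 0)) ↔
      |a - a'| + |b - b'| = 1 := by
  simp [mesh_adj, Fin.sum_univ_succ]

/-- The boundary of the rectangle `[0, m - 1] × [0, 1]` in the first two coordinates, traversed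
along the bottom row and back along the top row. -/
def rectangleCycle (n m : ℕ) (t : Fin (2 * m)) : Fin (n + 2) → ℤ :=
  Fin.cons (min (t : ℤ) (2 * m - 1 - t)) (Fin.cons (if (t : ℕ) < m then 0 else 1) 0)

theorem cycleGraph_isContained_mesh (n m : ℕ) : cycleGraph (2 * m) ⊑ mesh (n + 2) := by
  refine ⟨⟨⟨rectangleCycle n m, fun {s t} hst => ?_⟩, fun s t hst => ?_⟩⟩
  · have := s.isLt
    have := t.isLt
    rw [rectangleCycle, rectangleCycle, mesh_adj_cons_cons, abs_eq_max_neg, abs_eq_max_neg]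
    rcases cycleGraph_adj_val hst with h | h | h | h <;> split_ifs <;> omega
  · have h0 := congrFun hst 0
    have h1 := congrFun hst 1
    simp only [RelHom.coeFn_mk, rectangleCycle, Fin.cons_zero, Fin.cons_one] at h0 h1
    apply Fin.ext
    split_ifs at h1 <;> omega

theorem stmt8 (k p : ℕ) (hk : 2 ≤ k) (hp : 1 ≤ p) :
    (∀ n : ℕ, 1 ≤ n → (SimpleGraph.pathGraph n).diam = n - 1)
    ∧ (∀ D : ℕ, 1 ≤ D → (SimpleGraph.cycleGraph (2 * D)).diam = D)
    ∧ IsGreatest {n : ℕ | ∃ H : (mesh k).Subgraph, H.verts.Finite ∧ H.Connected ∧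
        (∀ v, (H.neighborSet v).ncard ≤ 2) ∧ (∀ u v : H.verts, H.coe.dist u v ≤ 2 * p) ∧
        H.verts.ncard = n} (4 * p)
    ∧ IsGreatest {n : ℕ | ∃ H : (mesh k).Subgraph, H.verts.Finite ∧ H.Connected ∧
        (∀ v, (H.neighborSet v).ncard ≤ 2) ∧ (∀ u v : H.verts, H.coe.dist u v ≤ 2 * p + 1) ∧
        H.verts.ncard = n} (4 * p + 2) := by
  obtain ⟨n, rfl⟩ := Nat.exists_eq_add_of_le' hk
  have hgreatest {R : ℕ} (hR : 1 ≤ R) := isGreatest_ncard_subgraph_of_isBipartite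
    (mesh_isBipartite (n + 2)) hR (cycleGraph_isContained_mesh n R)
  refine ⟨fun _ => pathGraph_diam, fun _ => cycleGraph_two_mul_diam, ?_, ?_⟩
  · rw [show 4 * p = 2 * (2 * p) by ring]
    exact hgreatest (by omega)
  · rw [show 4 * p + 2 = 2 * (2 * p + 1) by ring]
    exact hgreatest (by omega)
end
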